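/- arXiv:1209.6012 — 4 statements merged into one kernel-verified Lean document; each statement's English description precedes it below -/
import Mathlib

section
/- Let G = (V,E) be an undirected graph with minimum degree d_min and maximum degree d_max, and let ρ = d_max/d_min. Suppose V is partitioned into sets X_{−s},…,X_{k−1} such that for each i ≤ k−2, every node v ∈ X_i has at least ⌈d(v)/2⌉ neighbors in ∪_{j=i+1}^{k−1} X_j. Then for every i with −s ≤ i ≤ k−2, we have |X_i| ≤ 2ρ·|X_{k−1}|. -/
open Finset


variable {V : Type*} [Fintype V]

/-- The degree of `v` in `G`. -/
noncomputable def deg (G : SimpleGraph V) (v : V) : ℕ := Nat.card {u | G.Adj v u}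

/-- One synchronous round of the irreversible threshold-`lam` rule: a node increments
its weight iff at least `⌈lam · d(v)⌉` of its neighbors have strictly larger weight. -/
noncomputable def step (G : SimpleGraph V) (lam : ℝ) (c : V → ℕ) : V → ℕ :=
  fun v => if ⌈lam * (deg G v : ℝ)⌉₊ ≤ Nat.card {u | G.Adj v u ∧ c v < c u}
    then c v + 1 else c v

/-- A `(k,t)`-simple-monotone configuration (Definition 3 of the paper), encoded by a
level function `X : V → ℤ` with values in `[-(t-k+1), k-1]`:  `X⁻¹(k-1) ≠ ∅`, the
initial weight of `v` is `max (X v) 0`, and every non-top node has at least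
`⌈lam · d(v)⌉` neighbors of strictly higher level. -/
def SimpleMonotone (G : SimpleGraph V) (lam : ℝ) (k t : ℕ) (c : V → ℕ) : Prop :=
  ∃ X : V → ℤ,
    (∀ v, -((t : ℤ) - k + 1) ≤ X v ∧ X v ≤ (k : ℤ) - 1) ∧
    (∃ v, X v = (k : ℤ) - 1) ∧
    (∀ v, (c v : ℤ) = max (X v) 0) ∧
    (∀ v, X v < (k : ℤ) - 1 →
      ⌈lam * (deg G v : ℝ)⌉₊ ≤ Nat.card {u | G.Adj v u ∧ X v < X u})

/-- The `n`-node ring on `ZMod n`. -/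
def ringGraph (n : ℕ) : SimpleGraph (ZMod n) :=
  SimpleGraph.fromRel (fun a b => b = a + 1)

/-- The `n × m` torus on `ZMod n × ZMod m`. -/
def torusGraph (n m : ℕ) : SimpleGraph (ZMod n × ZMod m) :=
  SimpleGraph.fromRel (fun a b => (a.1 = b.1 ∧ b.2 = a.2 + 1) ∨ (a.2 = b.2 ∧ b.1 = a.1 + 1))

/-- if every node of level `i ≤ k-2` has at least `⌈d(v)/2⌉` neighbors of
strictly higher level, then each level class `X_i` (for `-s ≤ i ≤ k-2`) has size at most
`2ρ` times the size of the top class, where `ρ = d_max/d_min`. -/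
theorem stmt4 (G : SimpleGraph V) (dmin dmax : ℕ)
    (hdm : IsLeast (Set.range (deg G)) dmin)
    (hdM : IsGreatest (Set.range (deg G)) dmax)
    (hdmin : 0 < dmin)
    (k : ℕ) (hk : 2 ≤ k) (s : ℤ)
    (X : V → ℤ) (hlb : ∀ v, -s ≤ X v) (hub : ∀ v, X v ≤ (k : ℤ) - 1)
    (hnb : ∀ v, X v ≤ (k : ℤ) - 2 →
      ⌈(deg G v : ℝ) / 2⌉₊ ≤ Nat.card {u | G.Adj v u ∧ X v < X u}) :
    ∀ i : ℤ, -s ≤ i → i ≤ (k : ℤ) - 2 →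
      (Nat.card {v | X v = i} : ℝ) ≤
        2 * ((dmax : ℝ) / (dmin : ℝ)) * (Nat.card {v | X v = (k : ℤ) - 1} : ℝ) := by
  classical
  intro i hi hik
  set K : ℤ := (k : ℤ) - 2 with hKdef
  -- degree and neighbour counts as finset cards
  have hdeg : ∀ v, deg G v = (univ.filter (fun u => G.Adj v u)).card := by
    intro v; rw [deg, Nat.card_eq_card_toFinset, Set.toFinset_setOf]
  have hcardset : ∀ j : ℤ, Nat.card {v | X v = j} = (univ.filter (fun v => X v = j)).card := by
    intro j; rw [Nat.card_eq_card_toFinset, Set.toFinset_setOf]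
  -- key degree bound: every non-top vertex sends at least half its degree up
  have key : ∀ v, X v ≤ K → deg G v ≤ 2 * (univ.filter (fun u => G.Adj v u ∧ X v < X u)).card := by
    intro v hv
    have h1 := hnb v hv
    rw [Nat.card_eq_card_toFinset, Set.toFinset_setOf] at h1
    have h2 : (deg G v : ℝ) / 2 ≤ (⌈(deg G v : ℝ) / 2⌉₊ : ℝ) := Nat.le_ceil _
    have h3 : deg G v ≤ 2 * ⌈(deg G v : ℝ) / 2⌉₊ := by
      have : (deg G v : ℝ) ≤ 2 * (⌈(deg G v : ℝ) / 2⌉₊ : ℝ) := by linarith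
      exact_mod_cast this
    exact h3.trans (by omega)
  -- the cut function
  set cut : ℤ → ℕ :=
    fun j => ∑ v : V, (univ.filter (fun u => G.Adj v u ∧ X v ≤ j ∧ j < X u)).card with hcut
  -- lower bound on the cut
  have lower : ∀ j : ℤ, j ≤ K →
      (univ.filter (fun v => X v = j)).card * dmin ≤ 2 * cut j := by
    intro j hj
    calc (univ.filter (fun v => X v = j)).card * dmin
        = ∑ _v ∈ univ.filter (fun v => X v = j), dmin := by
          rw [Finset.sum_const, smul_eq_mul]
      _ ≤ ∑ v ∈ univ.filter (fun v => X v = j),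
            2 * (univ.filter (fun u => G.Adj v u ∧ X v ≤ j ∧ j < X u)).card := by
          apply Finset.sum_le_sum
          intro v hv
          rw [Finset.mem_filter] at hv
          have hXv : X v = j := hv.2
          have hmin : dmin ≤ deg G v := hdm.2 ⟨v, rfl⟩
          have hkey := key v (hXv ▸ hj)
          have heq : (univ.filter (fun u => G.Adj v u ∧ X v ≤ j ∧ j < X u))
              = (univ.filter (fun u => G.Adj v u ∧ X v < X u)) := by
            apply Finset.filter_congr
            intro u _
            constructor
            · rintro ⟨h1, _, h3⟩; exact ⟨h1, by omega⟩
            · rintro ⟨h1, h2⟩; exact ⟨h1, by omega, by omega⟩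
          rw [heq]
          omega
      _ ≤ ∑ v : V, 2 * (univ.filter (fun u => G.Adj v u ∧ X v ≤ j ∧ j < X u)).card :=
          Finset.sum_le_sum_of_subset (Finset.filter_subset _ _)
      _ = 2 * cut j := by rw [hcut, Finset.mul_sum]
  -- monotonicity of the cut
  have mono : ∀ j : ℤ, j + 1 ≤ K → cut j ≤ cut (j + 1) := by
    intro j hj
    -- split cut j
    have split1 : cut j
        = (∑ v : V, (univ.filter (fun u => G.Adj v u ∧ X v ≤ j ∧ X u = j + 1)).card)
        + ∑ v : V, (univ.filter (fun u => G.Adj v u ∧ X v ≤ j ∧ j + 1 < X u)).card := by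
      rw [hcut, ← Finset.sum_add_distrib]
      apply Finset.sum_congr rfl
      intro v _
      have hdisj : Disjoint (univ.filter (fun u => G.Adj v u ∧ X v ≤ j ∧ X u = j + 1))
          (univ.filter (fun u => G.Adj v u ∧ X v ≤ j ∧ j + 1 < X u)) := by
        rw [Finset.disjoint_filter]
        rintro u _ ⟨_, _, h3⟩ ⟨_, _, h6⟩
        omega
      rw [← Finset.card_union_of_disjoint hdisj, ← Finset.filter_or]
      apply congrArg
      apply Finset.filter_congr
      intro u _
      constructor
      · rintro ⟨h1, h2, h3⟩
        rcases lt_or_ge (j + 1) (X u) with h | h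
        · exact Or.inr ⟨h1, h2, h⟩
        · exact Or.inl ⟨h1, h2, by omega⟩
      · rintro (⟨h1, h2, h3⟩ | ⟨h1, h2, h3⟩) <;> exact ⟨h1, h2, by omega⟩
    have split2 : cut (j + 1)
        = (∑ v : V, (univ.filter (fun u => G.Adj v u ∧ X v = j + 1 ∧ j + 1 < X u)).card)
        + ∑ v : V, (univ.filter (fun u => G.Adj v u ∧ X v ≤ j ∧ j + 1 < X u)).card := by
      rw [hcut, ← Finset.sum_add_distrib]
      apply Finset.sum_congr rfl
      intro v _
      have hdisj : Disjoint (univ.filter (fun u => G.Adj v u ∧ X v = j + 1 ∧ j + 1 < X u))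
          (univ.filter (fun u => G.Adj v u ∧ X v ≤ j ∧ j + 1 < X u)) := by
        rw [Finset.disjoint_filter]
        rintro u _ ⟨_, h2, _⟩ ⟨_, h5, _⟩
        omega
      rw [← Finset.card_union_of_disjoint hdisj, ← Finset.filter_or]
      apply congrArg
      apply Finset.filter_congr
      intro u _
      constructor
      · rintro ⟨h1, h2, h3⟩
        rcases eq_or_lt_of_le h2 with h | h
        · exact Or.inl ⟨h1, h, h3⟩
        · exact Or.inr ⟨h1, by omega, h3⟩
      · rintro (⟨h1, h2, h3⟩ | ⟨h1, h2, h3⟩) <;> exact ⟨h1, by omega, h3⟩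
    rw [split1, split2]
    have hAB : (∑ v : V, (univ.filter (fun u => G.Adj v u ∧ X v ≤ j ∧ X u = j + 1)).card)
        ≤ ∑ v : V, (univ.filter (fun u => G.Adj v u ∧ X v = j + 1 ∧ j + 1 < X u)).card := by
      have hswAB : (∑ v : V, (univ.filter (fun u => G.Adj v u ∧ X v ≤ j ∧ X u = j + 1)).card)
          = ∑ w : V, (univ.filter (fun v => G.Adj v w ∧ X v ≤ j ∧ X w = j + 1)).card := by
        simp only [Finset.card_filter]
        exact Finset.sum_comm
      rw [hswAB]
      apply Finset.sum_le_sum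
      intro w _
      by_cases hw : X w = j + 1
      · -- w is at level j+1
        have hdown_eq : (univ.filter (fun v => G.Adj v w ∧ X v ≤ j ∧ X w = j + 1))
            = (univ.filter (fun v => G.Adj w v ∧ X v ≤ j)) := by
          apply Finset.filter_congr
          intro v _
          constructor
          · rintro ⟨h1, h2, _⟩; exact ⟨h1.symm, h2⟩
          · rintro ⟨h1, h2⟩; exact ⟨h1.symm, h2, hw⟩
        rw [hdown_eq]
        have hupeq : (univ.filter (fun u => G.Adj w u ∧ X w = j + 1 ∧ j + 1 < X u))
            = (univ.filter (fun u => G.Adj w u ∧ X w < X u)) := by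
          apply Finset.filter_congr
          intro u _
          constructor
          · rintro ⟨h1, _, h3⟩; exact ⟨h1, by omega⟩
          · rintro ⟨h1, h2⟩; exact ⟨h1, hw, by omega⟩
        rw [hupeq]
        have hdisj2 : Disjoint (univ.filter (fun v => G.Adj w v ∧ X v ≤ j))
            (univ.filter (fun u => G.Adj w u ∧ X w < X u)) := by
          rw [Finset.disjoint_filter]
          rintro u _ ⟨_, h2⟩ ⟨_, h4⟩
          omega
        have hdisj : (univ.filter (fun v => G.Adj w v ∧ X v ≤ j)).card
            + (univ.filter (fun u => G.Adj w u ∧ X w < X u)).card ≤ deg G w := by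
          rw [← Finset.card_union_of_disjoint hdisj2, hdeg]
          apply Finset.card_le_card
          apply Finset.union_subset <;>
            · apply Finset.monotone_filter_right
              rintro u - ⟨h1, -⟩
              exact h1
        have hkey := key w (by omega)
        omega
      · -- both sides are zero on the left
        have : (univ.filter (fun v => G.Adj v w ∧ X v ≤ j ∧ X w = j + 1)) = ∅ := by
          rw [Finset.filter_eq_empty_iff]
          rintro v _ ⟨_, _, h3⟩
          exact hw h3
        rw [this]
        simp
    omega
  -- chain: cut i ≤ cut K
  have chain : ∀ n : ℕ, ∀ j : ℤ, j = K - n → cut j ≤ cut K := by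
    intro n
    induction n with
    | zero => intro j hj; simp at hj; rw [hj]
    | succ m ih =>
      intro j hj
      have h1 : j + 1 ≤ K := by omega
      have h2 : j + 1 = K - m := by push_cast at hj ⊢; omega
      exact (mono j h1).trans (ih (j + 1) h2)
  have hchain : cut i ≤ cut K := by
    apply chain (K - i).toNat
    have : (0 : ℤ) ≤ K - i := by omega
    omega
  -- top bound
  have topbd : cut K ≤ (univ.filter (fun v => X v = (k : ℤ) - 1)).card * dmax := by
    have hcutK : cut K = ∑ w : V, (univ.filter (fun v => G.Adj v w ∧ X v ≤ K ∧ K < X w)).card := by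
      show (∑ v : V, (univ.filter (fun u => G.Adj v u ∧ X v ≤ K ∧ K < X u)).card) = _
      simp only [Finset.card_filter]
      exact Finset.sum_comm
    rw [hcutK]
    calc ∑ w : V, (univ.filter (fun v => G.Adj v w ∧ X v ≤ K ∧ K < X w)).card
        ≤ ∑ w : V, (if X w = (k : ℤ) - 1 then dmax else 0) := by
          apply Finset.sum_le_sum
          intro w _
          by_cases hw : X w = (k : ℤ) - 1
          · rw [if_pos hw]
            calc (univ.filter (fun v => G.Adj v w ∧ X v ≤ K ∧ K < X w)).card
                ≤ (univ.filter (fun v => G.Adj w v)).card := by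
                  apply Finset.card_le_card
                  apply Finset.monotone_filter_right
                  rintro v - ⟨h1, -⟩
                  exact h1.symm
              _ = deg G w := (hdeg w).symm
              _ ≤ dmax := hdM.2 ⟨w, rfl⟩
          · rw [if_neg hw]
            have : (univ.filter (fun v => G.Adj v w ∧ X v ≤ K ∧ K < X w)) = ∅ := by
              rw [Finset.filter_eq_empty_iff]
              rintro v _ ⟨_, _, h3⟩
              have := hub w
              omega
            rw [this]
            simp
      _ = (univ.filter (fun v => X v = (k : ℤ) - 1)).card * dmax := by
          rw [← Finset.sum_filter, Finset.sum_const, smul_eq_mul]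
  -- combine in ℕ
  have natineq : (univ.filter (fun v => X v = i)).card * dmin
      ≤ 2 * ((univ.filter (fun v => X v = (k : ℤ) - 1)).card * dmax) := by
    have h1 := lower i hik
    have h2 : 2 * cut i ≤ 2 * cut K := by omega
    omega
  -- conclude over ℝ
  rw [hcardset i, hcardset ((k : ℤ) - 1)]
  have hd : (0 : ℝ) < (dmin : ℝ) := by exact_mod_cast hdmin
  rw [show (2 : ℝ) * ((dmax : ℝ) / (dmin : ℝ)) * ((univ.filter (fun v => X v = (k : ℤ) - 1)).card : ℝ)
      = 2 * (dmax : ℝ) * ((univ.filter (fun v => X v = (k : ℤ) - 1)).card : ℝ) / (dmin : ℝ) by ring,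
    le_div_iff₀ hd]
  have hnat : (univ.filter (fun v => X v = i)).card * dmin
      ≤ 2 * dmax * (univ.filter (fun v => X v = (k : ℤ) - 1)).card := by
    calc (univ.filter (fun v => X v = i)).card * dmin
        ≤ 2 * ((univ.filter (fun v => X v = (k : ℤ) - 1)).card * dmax) := natineq
      _ = 2 * dmax * (univ.filter (fun v => X v = (k : ℤ) - 1)).card := by ring
  exact_mod_cast hnat
end

section
/- Let k ≥ 2, t ≥ k−1 be integers, s = t−k+1, ρ ≥ 1 real, and ℓ = ⌊(√((2ρs+ρ+1)² + 4ρ(k−1)) − (2ρs+ρ+1))/(2ρ)⌋. For any reals y_{−s}, y_{−s+1}, …, y_{k−2} with 0 ≤ y_j ≤ 2ρ for all j, it holds that (k−1 + Σ_{j=1}^{k−2} j·y_j)/(1 + Σ_{j=−s}^{k−2} y_j) ≥ (k−1 + ρℓ(ℓ+1))/(2ρ(ℓ+s+1) + 1). -/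
lemma gauss_icc (n : ℕ) : ∑ j ∈ Finset.Icc (1:ℤ) (n:ℤ), (j:ℝ) = n*(n+1)/2 := by
  induction n with
  | zero => simp
  | succ m ih =>
    have hins : Finset.Icc (1:ℤ) ((m:ℤ)+1) = insert ((m:ℤ)+1) (Finset.Icc (1:ℤ) (m:ℤ)) := by
      ext x; simp [Finset.mem_Icc, Finset.mem_insert]; omega
    rw [show (((m+1):ℕ):ℤ) = (m:ℤ)+1 by push_cast; ring, hins,
      Finset.sum_insert (by simp), ih]
    push_cast; ring

set_option maxHeartbeats 1000000 in
/-- the core optimization step of Theorem 1: over the box `0 ≤ y_j ≤ 2ρ`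
(for `-s ≤ j ≤ k-2`), the ratio `(k−1 + Σ_{j=1}^{k−2} j·y_j)/(1 + Σ_{j=−s}^{k−2} y_j)`
is at least `(k−1 + ρℓ(ℓ+1))/(2ρ(ℓ+s+1) + 1)`. -/
theorem stmt7 (k t : ℕ) (hk : 2 ≤ k) (ht : 1 ≤ t) (htk : k - 1 ≤ t)
    (ρ : ℝ) (hρ : 1 ≤ ρ) (y : ℤ → ℝ) :
    let s : ℤ := (t : ℤ) - k + 1
    let b : ℝ := 2 * ρ * (s : ℝ) + ρ + 1
    let ℓ : ℤ := ⌊(Real.sqrt (b ^ 2 + 4 * ρ * ((k : ℝ) - 1)) - b) / (2 * ρ)⌋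
    (∀ j ∈ Finset.Icc (-s) ((k : ℤ) - 2), 0 ≤ y j ∧ y j ≤ 2 * ρ) →
    ((k : ℝ) - 1 + ρ * (ℓ : ℝ) * ((ℓ : ℝ) + 1)) / (2 * ρ * ((ℓ : ℝ) + (s : ℝ) + 1) + 1) ≤
      ((k : ℝ) - 1 + ∑ j ∈ Finset.Icc (1 : ℤ) ((k : ℤ) - 2), (j : ℝ) * y j) /
        (1 + ∑ j ∈ Finset.Icc (-s) ((k : ℤ) - 2), y j) := by
  intro s b ℓ hy
  have hρ0 : (0:ℝ) < ρ := by linarith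
  have hk1 : (1:ℝ) ≤ (k:ℝ) - 1 := by
    have : (2:ℝ) ≤ (k:ℝ) := by exact_mod_cast hk
    linarith
  have hs0 : 0 ≤ s := by
    have : k ≤ t + 1 := by omega
    have : (k:ℤ) ≤ (t:ℤ) + 1 := by exact_mod_cast this
    simp only [s]; omega
  have hsR : (0:ℝ) ≤ (s:ℝ) := by exact_mod_cast hs0
  have hbdef : b = 2 * ρ * (s:ℝ) + ρ + 1 := rfl
  have hb0 : (0:ℝ) < b := by rw [hbdef]; nlinarith
  -- facts about the root
  set r : ℝ := (Real.sqrt (b ^ 2 + 4 * ρ * ((k : ℝ) - 1)) - b) / (2 * ρ) with hrdef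
  have hsqnn : (0:ℝ) ≤ b ^ 2 + 4 * ρ * ((k : ℝ) - 1) := by nlinarith
  have hsq : Real.sqrt (b ^ 2 + 4 * ρ * ((k : ℝ) - 1)) ^ 2
      = b ^ 2 + 4 * ρ * ((k : ℝ) - 1) := Real.sq_sqrt hsqnn
  have hsqpos : (0:ℝ) ≤ Real.sqrt (b ^ 2 + 4 * ρ * ((k : ℝ) - 1)) := Real.sqrt_nonneg _
  have hsb : b ≤ Real.sqrt (b ^ 2 + 4 * ρ * ((k : ℝ) - 1)) := by nlinarith
  have hr0 : 0 ≤ r := by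
    rw [hrdef]; apply div_nonneg (by linarith) (by linarith)
  have h2r : 2 * ρ * r = Real.sqrt (b ^ 2 + 4 * ρ * ((k : ℝ) - 1)) - b := by
    rw [hrdef]; field_simp
  have hquad : ρ * r ^ 2 + b * r = (k:ℝ) - 1 := by nlinarith [hsq, h2r]
  have h00 : ((0:ℤ):ℝ) ≤ r := by exact_mod_cast hr0
  have hℓ0 : 0 ≤ ℓ := Int.le_floor.mpr (by rw [hrdef] at h00; exact h00)
  have hℓR : (0:ℝ) ≤ (ℓ:ℝ) := by exact_mod_cast hℓ0
  have hℓr : (ℓ:ℝ) ≤ r := by rw [hrdef]; exact Int.floor_le _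
  have hrℓ : r < (ℓ:ℝ) + 1 := by rw [hrdef]; exact Int.lt_floor_add_one _
  have hA : ρ * (ℓ:ℝ) ^ 2 + b * (ℓ:ℝ) ≤ (k:ℝ) - 1 := by
    nlinarith [hquad, mul_nonneg hρ0.le (mul_nonneg (sub_nonneg.mpr hℓr)
      (by linarith : (0:ℝ) ≤ r + (ℓ:ℝ))), mul_nonneg hb0.le (sub_nonneg.mpr hℓr)]
  have hB : (k:ℝ) - 1 < ρ * ((ℓ:ℝ) + 1) ^ 2 + b * ((ℓ:ℝ) + 1) := by
    nlinarith [hquad, mul_pos hb0 (by linarith : (0:ℝ) < (ℓ:ℝ) + 1 - r),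
      mul_nonneg hρ0.le (mul_nonneg (sub_nonneg.mpr hrℓ.le)
        (by linarith : (0:ℝ) ≤ (ℓ:ℝ) + 1 + r))]
  have hA' : ρ * (ℓ:ℝ) ^ 2 + (2 * ρ * (s:ℝ) + ρ + 1) * (ℓ:ℝ) ≤ (k:ℝ) - 1 := hbdef ▸ hA
  have hB' : (k:ℝ) - 1 < ρ * ((ℓ:ℝ) + 1) ^ 2 + (2 * ρ * (s:ℝ) + ρ + 1) * ((ℓ:ℝ) + 1) :=
    hbdef ▸ hB
  have hℓk : ℓ ≤ (k:ℤ) - 2 := by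
    by_contra h
    push_neg at h
    have h1 : ((k:ℝ) - 1) ≤ (ℓ:ℝ) := by
      have : (k:ℤ) - 1 ≤ ℓ := by omega
      exact_mod_cast this
    nlinarith [hA', hb0, hk1, hsR]
  clear_value ℓ b r s
  clear hsq hsqpos hsb h2r hquad hsqnn h00 hr0 hℓr hrℓ hrdef hA hB
  clear r
  set M : ℝ := (k:ℝ) - 1 + ρ * (ℓ:ℝ) * ((ℓ:ℝ) + 1) with hMdef
  set D : ℝ := 2 * ρ * ((ℓ:ℝ) + (s:ℝ) + 1) + 1 with hDdef
  have hM0 : 0 < M := by nlinarith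
  have hD0 : 0 < D := by nlinarith
  set I := Finset.Icc (-s) ((k:ℤ) - 2) with hI
  have hS0 : 0 ≤ ∑ j ∈ I, y j :=
    Finset.sum_nonneg fun j hj => (hy j hj).1
  rw [div_le_div_iff₀ hD0 (by linarith)]
  -- c : coefficient in the numerator
  set c : ℤ → ℝ := fun j => if 1 ≤ j then (j:ℝ) else 0 with hc
  have hNs : ∑ j ∈ Finset.Icc (1:ℤ) ((k:ℤ)-2), (j:ℝ) * y j = ∑ j ∈ I, c j * y j := by
    rw [Finset.sum_congr rfl (fun j hj => ?_)]
    · exact Finset.sum_subset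
        (Finset.Icc_subset_Icc (by omega) le_rfl)
        (fun x hx hx' => by
          rw [hI] at hx
          simp only [Finset.mem_Icc] at hx hx'
          have hx1 : ¬ (1:ℤ) ≤ x := fun h => hx' ⟨h, hx.2⟩
          simp [c, hx1])
    · simp only [Finset.mem_Icc] at hj
      simp [c, hj.1]
  -- lower bound function
  set g : ℤ → ℝ := fun j => if j ≤ ℓ then (c j * D - M) * (2 * ρ) else 0 with hg
  have hkey : ∀ j ∈ I, g j ≤ (c j * D - M) * y j := by
    intro j hj
    simp only [hI, Finset.mem_Icc] at hj
    by_cases hjl : j ≤ ℓ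
    · simp only [hg, if_pos hjl]
      have hcd : c j * D - M ≤ 0 := by
        by_cases h1 : (1:ℤ) ≤ j
        · have hj1 : (1:ℝ) ≤ (j:ℝ) := by exact_mod_cast h1
          have hjℓ : (j:ℝ) ≤ (ℓ:ℝ) := by exact_mod_cast hjl
          simp only [hc, if_pos h1]
          -- j * D ≤ ℓ * D ≤ M
          have h2 : (ℓ:ℝ) * D ≤ M := by
            simp only [hDdef, hMdef]
            nlinarith [hA']
          nlinarith [hD0]
        · simp only [hc, if_neg h1]
          nlinarith
      nlinarith [(hy j (by rw [hI]; exact Finset.mem_Icc.mpr ⟨hj.1, hj.2⟩)).2]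
    · simp only [hg, if_neg hjl]
      push_neg at hjl
      have h1 : (1:ℤ) ≤ j := by omega
      have hj1 : ((ℓ:ℝ) + 1) ≤ (j:ℝ) := by exact_mod_cast hjl
      have hcd : 0 ≤ c j * D - M := by
        simp only [hc, if_pos h1]
        have h2 : M ≤ ((ℓ:ℝ) + 1) * D := by
          simp only [hDdef, hMdef]
          nlinarith [hB']
        nlinarith [hD0]
      exact mul_nonneg hcd (hy j (by rw [hI]; exact Finset.mem_Icc.mpr ⟨hj.1, hj.2⟩)).1
  have hsum1 : ∑ j ∈ I, g j ≤ ∑ j ∈ I, (c j * D - M) * y j := Finset.sum_le_sum hkey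
  -- compute ∑ g
  obtain ⟨n, hn⟩ : ∃ n : ℕ, (n:ℤ) = ℓ := ⟨ℓ.toNat, Int.toNat_of_nonneg hℓ0⟩
  have hgsum : ∑ j ∈ I, g j = ρ * (ℓ:ℝ) * ((ℓ:ℝ) + 1) * D - ((ℓ:ℝ) + (s:ℝ) + 1) * M * (2 * ρ) := by
    have h1 : ∑ j ∈ I, g j = ∑ j ∈ Finset.Icc (-s) ℓ, (c j * D - M) * (2 * ρ) := by
      rw [← Finset.sum_subset (Finset.Icc_subset_Icc le_rfl hℓk)
        (fun x hx hx' => by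
          simp only [Finset.mem_Icc] at hx hx'
          have : ¬ x ≤ ℓ := by omega
          simp [hg, this])]
      exact Finset.sum_congr rfl (fun j hj => by
        simp only [Finset.mem_Icc] at hj
        simp [hg, hj.2])
    have hcsum : ∑ j ∈ Finset.Icc (-s) ℓ, c j = (ℓ:ℝ) * ((ℓ:ℝ) + 1) / 2 := by
      rw [← Finset.sum_subset (Finset.Icc_subset_Icc (by omega) le_rfl :
          Finset.Icc (1:ℤ) ℓ ⊆ Finset.Icc (-s) ℓ)
        (fun x hx hx' => by
          simp only [Finset.mem_Icc] at hx hx'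
          have : ¬ (1:ℤ) ≤ x := by omega
          simp [hc, this])]
      have e1 : ∑ j ∈ Finset.Icc (1:ℤ) ℓ, c j = ∑ j ∈ Finset.Icc (1:ℤ) ℓ, (j:ℝ) :=
        Finset.sum_congr rfl (fun j hj => by
          simp only [Finset.mem_Icc] at hj
          simp [hc, hj.1])
      rw [e1, ← hn, gauss_icc]
      push_cast
      ring
    have hcard : ((Finset.Icc (-s) ℓ).card : ℝ) = (ℓ:ℝ) + (s:ℝ) + 1 := by
      rw [Int.card_Icc]
      have h2 : (ℓ + 1 - -s).toNat = (ℓ + 1 + s).toNat := by ring_nf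
      rw [h2]
      have h3 : ((ℓ + 1 + s).toNat : ℤ) = ℓ + 1 + s := Int.toNat_of_nonneg (by omega)
      have : (((ℓ + 1 + s).toNat : ℤ) : ℝ) = ((ℓ + 1 + s : ℤ) : ℝ) := by exact_mod_cast h3
      push_cast at this ⊢
      linarith [this]
    rw [h1]
    have : ∑ j ∈ Finset.Icc (-s) ℓ, (c j * D - M) * (2 * ρ)
        = (∑ j ∈ Finset.Icc (-s) ℓ, c j) * (D * (2 * ρ))
          - ((Finset.Icc (-s) ℓ).card : ℝ) * (M * (2 * ρ)) := by
      rw [Finset.sum_congr rfl (fun j _ => by ring :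
        ∀ j ∈ Finset.Icc (-s) ℓ, (c j * D - M) * (2 * ρ)
          = c j * (D * (2 * ρ)) - M * (2 * ρ)),
        Finset.sum_sub_distrib, ← Finset.sum_mul, Finset.sum_const, nsmul_eq_mul]
    rw [this, hcsum, hcard]
    ring
  -- expand the sum of products
  have hexp : ∑ j ∈ I, (c j * D - M) * y j
      = (∑ j ∈ I, c j * y j) * D - M * (∑ j ∈ I, y j) := by
    rw [Finset.sum_congr rfl (fun j _ => by ring :
      ∀ j ∈ I, (c j * D - M) * y j = (c j * y j) * D - M * y j),
      Finset.sum_sub_distrib, ← Finset.sum_mul, ← Finset.mul_sum]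
  rw [hNs]
  rw [hgsum, hexp] at hsum1
  -- final identity: (k-1)*D - M + ρℓ(ℓ+1)D - 2ρ(ℓ+s+1)M = 0
  have hid : ((k:ℝ) - 1) * D - M + (ρ * (ℓ:ℝ) * ((ℓ:ℝ) + 1) * D
      - ((ℓ:ℝ) + (s:ℝ) + 1) * M * (2 * ρ)) = 0 := by
    simp only [hMdef, hDdef]; ring
  nlinarith [hsum1, hid]
end

section
/- Let G = (V,E) be an undirected connected graph with degree ratio ρ = d_max/d_min, let k ≥ 2 and t ≥ k−1 be integers, s = t−k+1, λ = 1/2, and ℓ = ⌊(√((2ρs+ρ+1)² + 4ρ(k−1)) − (2ρs+ρ+1))/(2ρ)⌋. Then every (k,t)-dynamo C on G satisfies w(C) ≥ |V|·(k−1 + ρℓ(ℓ+1))/(2ρ(ℓ+s+1) + 1). -/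
variable {V : Type*} [Fintype V]

open Finset in
open scoped Classical in
private lemma natCard_setOf_eq {V : Type*} [Fintype V] (p : V → Prop) :
    Nat.card {u | p u} = (Finset.univ.filter p).card := by
  rw [Nat.card_coe_set_eq, Set.ncard_eq_toFinset_card', Set.toFinset_setOf]

open scoped Classical in
private lemma deg_eq_filter {V : Type*} [Fintype V] (G : SimpleGraph V) (v : V) :
    deg G v = (Finset.univ.filter (fun u => G.Adj v u)).card :=
  natCard_setOf_eq _

private lemma step_ge {V : Type*} [Fintype V] (G : SimpleGraph V) (lam : ℝ) (c : V → ℕ) (v : V) :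
    c v ≤ step G lam c v := by
  unfold step; split_ifs <;> omega

private lemma step_le_add_one {V : Type*} [Fintype V] (G : SimpleGraph V) (lam : ℝ) (c : V → ℕ)
    (v : V) : step G lam c v ≤ c v + 1 := by
  unfold step; split_ifs <;> omega

private lemma step_bound {V : Type*} [Fintype V] (G : SimpleGraph V)
    (hd : ∀ v, 1 ≤ deg G v) (m : ℕ) (c : V → ℕ) (h : ∀ v, c v ≤ m) (v : V) :
    step G (1/2) c v ≤ m := by
  unfold step
  split_ifs with hc
  · rcases lt_or_eq_of_le (h v) with hlt | heq
    · omega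
    · exfalso
      have hempty : {u | G.Adj v u ∧ c v < c u} = (∅ : Set V) := by
        ext u
        simp only [Set.mem_setOf_eq, Set.mem_empty_iff_false, iff_false, not_and, not_lt]
        intro _
        have := h u
        omega
      rw [hempty] at hc
      have h0 : Nat.card (∅ : Set V) = 0 := by simp
      rw [h0] at hc
      have h1 : 0 < (1/2 : ℝ) * (deg G v : ℝ) := by
        have := hd v
        have : (1:ℝ) ≤ (deg G v : ℝ) := by exact_mod_cast this
        linarith
      have := Nat.one_le_ceil_iff.2 h1
      omega
  · exact h v

private lemma sum_max_Icc (m : ℤ) (hm : m ≤ 0) (n : ℕ) :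
    ∑ i ∈ Finset.Icc m (n : ℤ), ((max i 0 : ℤ) : ℝ) = (n : ℝ) * ((n : ℝ) + 1) / 2 := by
  induction n with
  | zero =>
    simp only [Nat.cast_zero]
    have h : ∀ i ∈ Finset.Icc m (0:ℤ), ((max i 0 : ℤ) : ℝ) = 0 := by
      intro i hi
      simp only [Finset.mem_Icc] at hi
      have : max i 0 = 0 := by omega
      rw [this]; simp
    rw [Finset.sum_congr rfl h]
    simp
  | succ n ih =>
    have hcast : ((n + 1 : ℕ) : ℤ) = (n : ℤ) + 1 := by push_cast; ring
    have hins : Finset.Icc m ((n:ℤ) + 1) = insert ((n:ℤ) + 1) (Finset.Icc m (n:ℤ)) := by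
      ext i
      simp only [Finset.mem_Icc, Finset.mem_insert]
      omega
    have hnot : ((n:ℤ) + 1) ∉ Finset.Icc m (n:ℤ) := by
      simp only [Finset.mem_Icc]; omega
    rw [hcast, hins, Finset.sum_insert hnot, ih]
    have : ((max ((n:ℤ) + 1) 0 : ℤ) : ℝ) = (n : ℝ) + 1 := by
      rw [max_eq_left (by omega)]
      push_cast; ring
    rw [this]
    push_cast; ring

private lemma card_filter_indep {V : Type*} [Fintype V] (p : V → Prop)
    (h1 h2 : DecidablePred p) :
    (@Finset.filter V p h1 Finset.univ).card = (@Finset.filter V p h2 Finset.univ).card := by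
  rw [Subsingleton.elim h1 h2]

open Finset in
open scoped Classical in
private lemma master_count {V : Type*} [Fintype V] (G : SimpleGraph V) (X : V → ℤ) (K : ℤ)
    (a : ℤ → ℝ)
    (hX : ∀ v, X v ≤ K)
    (hupN : ∀ v, X v < K →
      ((deg G v : ℝ) / 2) ≤ (Nat.card {u | G.Adj v u ∧ X v < X u} : ℝ))
    (ha0 : ∀ i, 0 ≤ a i) (hmono : Monotone a) :
    ∑ v ∈ univ.filter (fun v => X v < K), (deg G v : ℝ) * (a (X v) - a (X v - 1))
      ≤ 2 * a (K - 1) * ∑ u ∈ univ.filter (fun v => ¬ X v < K), (deg G u : ℝ) := by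
  have hup : ∀ v, X v < K →
      ((deg G v : ℝ) / 2) ≤ ((univ.filter fun u => G.Adj v u ∧ X v < X u).card : ℝ) := by
    intro v hv
    have h := hupN v hv
    rw [natCard_setOf_eq] at h
    refine le_trans h (le_of_eq ?_)
    norm_cast
    exact card_filter_indep _ _ _
  set T : Finset V := univ.filter (fun v => X v < K) with hT
  set up : V → Finset V := fun v => univ.filter (fun u => G.Adj v u ∧ X v < X u) with hup_def
  set dn : V → Finset V := fun u => univ.filter (fun v => G.Adj v u ∧ X v < X u) with hdn_def
  -- key double counting
  have key : ∑ v, ((up v).card : ℝ) * a (X v)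
      = ∑ u, ∑ v, (if G.Adj v u ∧ X v < X u then a (X v) else 0) := by
    rw [Finset.sum_comm]
    refine Finset.sum_congr rfl fun v _ => ?_
    rw [← Finset.sum_filter]
    rw [Finset.sum_const, nsmul_eq_mul]
  have upper : ∀ u, ∑ v, (if G.Adj v u ∧ X v < X u then a (X v) else 0)
      ≤ ((dn u).card : ℝ) * a (X u - 1) := by
    intro u
    have h1 : ∑ v, (if G.Adj v u ∧ X v < X u then a (X v) else 0)
        ≤ ∑ v, (if G.Adj v u ∧ X v < X u then a (X u - 1) else 0) := by
      refine Finset.sum_le_sum fun v _ => ?_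
      split_ifs with h
      · exact hmono (by omega)
      · exact le_rfl
    calc ∑ v, (if G.Adj v u ∧ X v < X u then a (X v) else 0)
        ≤ ∑ v, (if G.Adj v u ∧ X v < X u then a (X u - 1) else 0) := h1
      _ = ((dn u).card : ℝ) * a (X u - 1) := by
          rw [← Finset.sum_filter, Finset.sum_const, nsmul_eq_mul]
  -- cardinality bounds on dn
  have hdn_sub : ∀ u, dn u ⊆ univ.filter (fun v => G.Adj u v) := by
    intro u v hv
    simp only [hdn_def, Finset.mem_filter] at hv ⊢
    exact ⟨Finset.mem_univ _, hv.2.1.symm⟩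
  have hup_sub : ∀ u, up u ⊆ univ.filter (fun v => G.Adj u v) := by
    intro u v hv
    simp only [hup_def, Finset.mem_filter] at hv ⊢
    exact ⟨Finset.mem_univ _, hv.2.1⟩
  have hcard_dn_le : ∀ u, ((dn u).card : ℝ) ≤ (deg G u : ℝ) := by
    intro u
    rw [deg_eq_filter]
    exact_mod_cast Nat.cast_le.2 (Finset.card_le_card (hdn_sub u))
  have hcard_dn_half : ∀ u, X u < K → ((dn u).card : ℝ) ≤ (deg G u : ℝ) / 2 := by
    intro u hu
    have hsd : dn u ⊆ (univ.filter (fun v => G.Adj u v)) \ (up u) := by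
      intro v hv
      simp only [hdn_def, Finset.mem_filter] at hv
      rw [Finset.mem_sdiff]
      constructor
      · simp only [Finset.mem_filter]
        exact ⟨Finset.mem_univ _, hv.2.1.symm⟩
      · simp only [hup_def, Finset.mem_filter, not_and]
        intro _ _
        omega
    have h1 : (dn u).card ≤ (univ.filter (fun v => G.Adj u v)).card - (up u).card :=
      le_trans (Finset.card_le_card hsd) (le_of_eq (Finset.card_sdiff_of_subset (hup_sub u)))
    have h2 : (up u).card ≤ (univ.filter (fun v => G.Adj u v)).card :=
      Finset.card_le_card (hup_sub u)
    have h3 : ((dn u).card : ℝ) ≤ ((univ.filter (fun v => G.Adj u v)).card : ℝ) - ((up u).card : ℝ) := by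
      have := Nat.cast_le (α := ℝ) |>.2 h1
      rwa [Nat.cast_sub h2] at this
    have h4 := hup u hu
    rw [deg_eq_filter] at h4 ⊢
    linarith
  -- main chain
  have main1 : ∑ v ∈ T, (deg G v : ℝ) / 2 * a (X v)
      ≤ ∑ u ∈ T, (deg G u : ℝ) / 2 * a (X u - 1)
        + ∑ u ∈ univ.filter (fun v => ¬ X v < K), (deg G u : ℝ) * a (K - 1) := by
    have c1 : ∑ v ∈ T, (deg G v : ℝ) / 2 * a (X v) ≤ ∑ v ∈ T, ((up v).card : ℝ) * a (X v) := by
      refine Finset.sum_le_sum fun v hv => ?_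
      have hvT : X v < K := by
        simp only [hT, Finset.mem_filter] at hv; exact hv.2
      exact mul_le_mul_of_nonneg_right (hup v hvT) (ha0 _)
    have c2 : ∑ v ∈ T, ((up v).card : ℝ) * a (X v) ≤ ∑ v, ((up v).card : ℝ) * a (X v) := by
      refine Finset.sum_le_sum_of_subset_of_nonneg (Finset.filter_subset _ _) fun v _ _ => ?_
      exact mul_nonneg (Nat.cast_nonneg _) (ha0 _)
    have c3 : ∑ v, ((up v).card : ℝ) * a (X v) ≤ ∑ u, ((dn u).card : ℝ) * a (X u - 1) := by
      rw [key]
      exact Finset.sum_le_sum fun u _ => upper u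
    have c4 : ∑ u, ((dn u).card : ℝ) * a (X u - 1)
        = ∑ u ∈ T, ((dn u).card : ℝ) * a (X u - 1)
          + ∑ u ∈ univ.filter (fun v => ¬ X v < K), ((dn u).card : ℝ) * a (X u - 1) :=
      (Finset.sum_filter_add_sum_filter_not univ _ _).symm
    have c5 : ∑ u ∈ T, ((dn u).card : ℝ) * a (X u - 1)
        ≤ ∑ u ∈ T, (deg G u : ℝ) / 2 * a (X u - 1) := by
      refine Finset.sum_le_sum fun u hu => ?_
      have huT : X u < K := by simp only [hT, Finset.mem_filter] at hu; exact hu.2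
      exact mul_le_mul_of_nonneg_right (hcard_dn_half u huT) (ha0 _)
    have c6 : ∑ u ∈ univ.filter (fun v => ¬ X v < K), ((dn u).card : ℝ) * a (X u - 1)
        ≤ ∑ u ∈ univ.filter (fun v => ¬ X v < K), (deg G u : ℝ) * a (K - 1) := by
      refine Finset.sum_le_sum fun u hu => ?_
      have huK : X u = K := by
        simp only [Finset.mem_filter] at hu
        exact le_antisymm (hX u) (not_lt.1 hu.2)
      rw [huK]
      exact mul_le_mul_of_nonneg_right (hcard_dn_le u) (ha0 _)
    linarith
  have e1 : ∑ v ∈ T, (deg G v : ℝ) * (a (X v) - a (X v - 1))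
      = (∑ v ∈ T, (deg G v : ℝ) / 2 * a (X v)) * 2
        - (∑ v ∈ T, (deg G v : ℝ) / 2 * a (X v - 1)) * 2 := by
    rw [Finset.sum_mul, Finset.sum_mul, ← Finset.sum_sub_distrib]
    exact Finset.sum_congr rfl fun v _ => by ring
  have e2 : ∑ u ∈ univ.filter (fun v => ¬ X v < K), (deg G u : ℝ) * a (K - 1)
      = a (K - 1) * ∑ u ∈ univ.filter (fun v => ¬ X v < K), (deg G u : ℝ) := by
    rw [Finset.mul_sum]
    exact Finset.sum_congr rfl fun u _ => by ring
  rw [e1]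
  rw [e2] at main1
  linarith
set_option maxHeartbeats 1600000 in
/-- Theorem 1, case t ≥ k−1: any (k,t)-dynamo with λ = 1/2 has weight at
least `|V|·(k−1 + ρℓ(ℓ+1))/(2ρ(ℓ+s+1) + 1)`, where ρ = d_max/d_min, s = t−k+1 and
ℓ = ⌊(√((2ρs+ρ+1)² + 4ρ(k−1)) − (2ρs+ρ+1))/(2ρ)⌋. -/
theorem stmt8 (G : SimpleGraph V) (hG : G.Connected)
    (dmin dmax : ℕ)
    (hdm : IsLeast (Set.range (deg G)) dmin)
    (hdM : IsGreatest (Set.range (deg G)) dmax)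
    (hdmin : 0 < dmin)
    (k t : ℕ) (hk : 2 ≤ k) (ht : 1 ≤ t) (htk : k - 1 ≤ t)
    (c : V → ℕ) (hval : ∀ v, c v ≤ k - 1)
    (hdyn : ∀ v, (step G (1/2))^[t] c v = k - 1) :
    let ρ : ℝ := (dmax : ℝ) / (dmin : ℝ)
    let s : ℝ := (t : ℝ) - k + 1
    let b : ℝ := 2 * ρ * s + ρ + 1
    let ℓ : ℤ := ⌊(Real.sqrt (b ^ 2 + 4 * ρ * ((k : ℝ) - 1)) - b) / (2 * ρ)⌋
    (Fintype.card V : ℝ) * (((k : ℝ) - 1) + ρ * (ℓ : ℝ) * ((ℓ : ℝ) + 1)) /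
        (2 * ρ * ((ℓ : ℝ) + s + 1) + 1) ≤ ∑ v, (c v : ℝ) := by
  classical
  intro ρ s b ℓ
  have hρ_def : ρ = (dmax : ℝ) / (dmin : ℝ) := rfl
  have hs_def : s = (t : ℝ) - k + 1 := rfl
  have hb_def : b = 2 * ρ * s + ρ + 1 := rfl
  have hℓ_def : ℓ = ⌊(Real.sqrt (b ^ 2 + 4 * ρ * ((k : ℝ) - 1)) - b) / (2 * ρ)⌋ := rfl
  clear_value ℓ b s ρ
  -- degree facts
  have hdeg_ge : ∀ v, dmin ≤ deg G v := fun v => hdm.2 ⟨v, rfl⟩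
  have hdeg_le : ∀ v, deg G v ≤ dmax := fun v => hdM.2 ⟨v, rfl⟩
  have hminmax : dmin ≤ dmax := by
    obtain ⟨v, hv⟩ := hdm.1
    exact hv ▸ hdeg_le v
  have hdmax : 0 < dmax := lt_of_lt_of_le hdmin hminmax
  have hdminR : (0:ℝ) < (dmin:ℝ) := by exact_mod_cast hdmin
  have hdmaxR : (0:ℝ) < (dmax:ℝ) := by exact_mod_cast hdmax
  have hρpos : 0 < ρ := hρ_def ▸ div_pos hdmaxR hdminR
  have hkR : (2:ℝ) ≤ (k:ℝ) := by exact_mod_cast hk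
  have hs0 : (0:ℝ) ≤ s := by
    have h1 : ((k - 1 : ℕ) : ℝ) ≤ (t:ℝ) := by exact_mod_cast htk
    rw [Nat.cast_sub (by omega : 1 ≤ k)] at h1
    rw [hs_def]; push_cast at h1 ⊢; linarith
  have hb0 : (0:ℝ) < b := by
    have : 0 ≤ 2 * ρ * s := by positivity
    rw [hb_def]; linarith
  -- properties of ℓ and B
  have hsqnn : (0:ℝ) ≤ b ^ 2 + 4 * ρ * ((k:ℝ) - 1) := by nlinarith
  have hsq : Real.sqrt (b ^ 2 + 4 * ρ * ((k:ℝ) - 1)) ^ 2 = b ^ 2 + 4 * ρ * ((k:ℝ) - 1) :=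
    Real.sq_sqrt hsqnn
  have hsqb : b ≤ Real.sqrt (b ^ 2 + 4 * ρ * ((k:ℝ) - 1)) := by
    calc b = Real.sqrt (b ^ 2) := (Real.sqrt_sq hb0.le).symm
      _ ≤ _ := Real.sqrt_le_sqrt (by nlinarith)
  set x : ℝ := (Real.sqrt (b ^ 2 + 4 * ρ * ((k : ℝ) - 1)) - b) / (2 * ρ) with hx_def
  clear_value x
  have hx0 : 0 ≤ x := by rw [hx_def]; exact div_nonneg (by linarith) (by linarith)
  have hxq : ρ * x ^ 2 + b * x = (k:ℝ) - 1 := by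
    rw [hx_def]
    field_simp
    rw [show b ^ 2 + ρ * 4 * ((k:ℝ) - 1) = b ^ 2 + 4 * ρ * ((k:ℝ) - 1) by ring]
    nlinarith [hsq]
  have hℓx : (ℓ:ℝ) ≤ x := by rw [hℓ_def]; exact Int.floor_le x
  have hxℓ : x < (ℓ:ℝ) + 1 := by rw [hℓ_def]; exact_mod_cast Int.lt_floor_add_one x
  have hl0 : (0:ℤ) ≤ ℓ := by rw [hℓ_def]; exact Int.floor_nonneg.2 hx0
  have hl0R : (0:ℝ) ≤ (ℓ:ℝ) := by exact_mod_cast hl0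
  have hsq1 : (ℓ:ℝ) ^ 2 ≤ x ^ 2 := pow_le_pow_left₀ hl0R hℓx 2
  have hsq2 : x ^ 2 ≤ ((ℓ:ℝ) + 1) ^ 2 := pow_le_pow_left₀ hx0 hxℓ.le 2
  have hql : ρ * (ℓ:ℝ) ^ 2 + b * (ℓ:ℝ) ≤ (k:ℝ) - 1 := by
    have h1 := mul_le_mul_of_nonneg_left hsq1 hρpos.le
    have h2 := mul_le_mul_of_nonneg_left hℓx hb0.le
    linarith
  have hqu : (k:ℝ) - 1 ≤ ρ * ((ℓ:ℝ) + 1) ^ 2 + b * ((ℓ:ℝ) + 1) := by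
    have h1 := mul_le_mul_of_nonneg_left hsq2 hρpos.le
    have h2 := mul_le_mul_of_nonneg_left hxℓ.le hb0.le
    linarith
  have hden : (0:ℝ) < 2 * ρ * ((ℓ:ℝ) + s + 1) + 1 := by
    have h1 : 0 ≤ ρ * ((ℓ:ℝ) + s + 1) := mul_nonneg hρpos.le (by linarith)
    linarith
  set B : ℝ := (((k : ℝ) - 1) + ρ * (ℓ : ℝ) * ((ℓ : ℝ) + 1)) / (2 * ρ * ((ℓ : ℝ) + s + 1) + 1)
    with hB_def
  clear_value B
  have hBeq : B * (2 * ρ * ((ℓ:ℝ) + s + 1) + 1) = ((k:ℝ) - 1) + ρ * (ℓ:ℝ) * ((ℓ:ℝ) + 1) := by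
    rw [hB_def]; exact div_mul_cancel₀ _ hden.ne'
  have hBl : (ℓ:ℝ) ≤ B := by
    rw [hB_def, le_div_iff₀ hden]
    rw [hb_def] at hql
    linarith
  have hBu : B ≤ (ℓ:ℝ) + 1 := by
    rw [hB_def, div_le_iff₀ hden]
    rw [hb_def] at hqu
    linarith
  have hB0 : 0 ≤ B := le_trans hl0R hBl
  -- the dynamics
  have hdeg1 : ∀ v, 1 ≤ deg G v := fun v => le_trans hdmin (hdeg_ge v)
  set cs : ℕ → V → ℕ := fun r => (step G (1/2))^[r] c with hcs_def
  have hcssucc : ∀ r, cs (r+1) = step G (1/2) (cs r) := fun r => Function.iterate_succ_apply' _ _ _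
  have hbd : ∀ r v, cs r v ≤ k - 1 := by
    intro r
    induction r with
    | zero => exact hval
    | succ r ih => rw [hcssucc]; exact step_bound G hdeg1 (k-1) (cs r) ih
  have hgrow : ∀ r v, cs r v ≤ c v + r := by
    intro r
    induction r with
    | zero => intro v; simp [hcs_def]
    | succ r ih =>
      intro v
      rw [hcssucc]
      calc step G (1/2) (cs r) v ≤ cs r v + 1 := step_le_add_one _ _ _ _
        _ ≤ c v + (r + 1) := by have := ih v; omega
  have hexists : ∀ v, ∃ r, cs r v = k - 1 := fun v => ⟨t, hdyn v⟩
  obtain ⟨f, hf_val⟩ : ∃ f : V → ℕ, ∀ v, f v = Nat.find (hexists v) := ⟨_, fun _ => rfl⟩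
  have hf_le : ∀ v, f v ≤ t := fun v => by rw [hf_val]; exact Nat.find_le (hdyn v)
  have hf_spec : ∀ v, cs (f v) v = k - 1 := fun v => by rw [hf_val]; exact Nat.find_spec (hexists v)
  have hf_min : ∀ v r, r < f v → cs r v ≠ k - 1 := by
    intro v r hr
    rw [hf_val] at hr
    exact Nat.find_min (hexists v) hr
  obtain ⟨X, hX_val⟩ : ∃ X : V → ℤ, ∀ v, X v = (k:ℤ) - 1 - (f v : ℤ) := ⟨_, fun _ => rfl⟩
  set K : ℤ := (k:ℤ) - 1 with hK_def
  have hXK : ∀ v, X v ≤ K := by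
    intro v
    rw [hX_val, hK_def]
    have : (0:ℤ) ≤ (f v : ℤ) := by positivity
    omega
  set sZ : ℤ := (t:ℤ) - k + 1 with hsZ_def
  have hsZ0 : 0 ≤ sZ := by
    have : ((k - 1 : ℕ) : ℤ) ≤ (t:ℤ) := by exact_mod_cast htk
    omega
  have hXlow : ∀ v, -sZ ≤ X v := by
    intro v
    have h1 : (f v : ℤ) ≤ (t : ℤ) := by exact_mod_cast hf_le v
    rw [hX_val, hsZ_def]
    omega
  have hcX : ∀ v, X v ≤ (c v : ℤ) := by
    intro v
    have h1 : k - 1 ≤ c v + f v := by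
      rw [← hf_spec v]; exact hgrow (f v) v
    rw [hX_val]
    omega
  -- the threshold condition for non-top vertices
  have hup : ∀ v, X v < K →
      ((deg G v : ℝ) / 2) ≤ (Nat.card {u | G.Adj v u ∧ X v < X u} : ℝ) := by
    intro v hv
    have hf0 : f v ≠ 0 := by
      intro h0
      rw [hX_val, hK_def, h0] at hv
      omega
    obtain ⟨r, hr⟩ : ∃ r, f v = r + 1 := ⟨f v - 1, by omega⟩
    have hmin : cs r v ≠ k - 1 := hf_min v r (by omega)
    have hstep : step G (1/2) (cs r) v = k - 1 := by
      rw [← hcssucc, ← hr]; exact hf_spec v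
    unfold step at hstep
    by_cases hcond : ⌈(1/2 : ℝ) * (deg G v : ℝ)⌉₊ ≤ Nat.card {u | G.Adj v u ∧ cs r v < cs r u}
    · rw [if_pos hcond] at hstep
      have hsub : Nat.card {u | G.Adj v u ∧ cs r v < cs r u}
          ≤ Nat.card {u | G.Adj v u ∧ X v < X u} := by
        rw [natCard_setOf_eq, natCard_setOf_eq]
        refine Finset.card_le_card fun u hu => ?_
        simp only [Finset.mem_filter] at hu ⊢
        refine ⟨Finset.mem_univ _, hu.2.1, ?_⟩
        have h1 : cs r u = k - 1 := by
          have := hbd r u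
          have := hu.2.2
          omega
        have h2 : f u ≤ r := by rw [hf_val]; exact Nat.find_le h1
        have h3 : (f u : ℤ) ≤ (r : ℤ) := by exact_mod_cast h2
        have h4 : (f v : ℤ) = (r : ℤ) + 1 := by exact_mod_cast hr
        rw [hX_val, hX_val]
        omega
      have hcond2 : ⌈(1/2 : ℝ) * (deg G v : ℝ)⌉₊
          ≤ Nat.card {u | G.Adj v u ∧ X v < X u} :=
        le_trans hcond hsub
      calc (deg G v : ℝ) / 2 = (1/2 : ℝ) * (deg G v : ℝ) := by ring
        _ ≤ (⌈(1/2 : ℝ) * (deg G v : ℝ)⌉₊ : ℝ) := Nat.le_ceil _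
        _ ≤ _ := by exact_mod_cast hcond2
    · rw [if_neg hcond] at hstep
      exact absurd hstep hmin
  -- the weight function a
  obtain ⟨a, ha_val⟩ : ∃ a : ℤ → ℝ, ∀ j,
      a j = ∑ i ∈ Finset.Icc (-sZ) (min j ℓ), (B - ((max i 0 : ℤ) : ℝ)) := ⟨_, fun _ => rfl⟩
  have hterm0 : ∀ i : ℤ, i ≤ ℓ → 0 ≤ B - ((max i 0 : ℤ) : ℝ) := by
    intro i hi
    have h1 : ((max i 0 : ℤ) : ℝ) ≤ (ℓ:ℝ) := by exact_mod_cast (by omega : max i 0 ≤ ℓ)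
    linarith
  have ha0 : ∀ j, 0 ≤ a j := by
    intro j
    rw [ha_val]
    refine Finset.sum_nonneg fun i hi => hterm0 i ?_
    simp only [Finset.mem_Icc] at hi
    omega
  have hamono : Monotone a := by
    intro j1 j2 h
    rw [ha_val, ha_val]
    refine Finset.sum_le_sum_of_subset_of_nonneg
      (Finset.Icc_subset_Icc_right (by omega)) fun i hi _ => hterm0 i ?_
    simp only [Finset.mem_Icc] at hi
    omega
  have hastep : ∀ j : ℤ, -sZ ≤ j → j ≤ ℓ → a j - a (j - 1) = B - ((max j 0 : ℤ) : ℝ) := by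
    intro j h1 h2
    have hmin1 : min j ℓ = j := min_eq_left h2
    have hmin2 : min (j-1) ℓ = j - 1 := min_eq_left (by omega)
    have hins : Finset.Icc (-sZ) j = insert j (Finset.Icc (-sZ) (j-1)) := by
      ext i
      simp only [Finset.mem_Icc, Finset.mem_insert]
      omega
    have hnot : j ∉ Finset.Icc (-sZ) (j-1) := by simp only [Finset.mem_Icc]; omega
    rw [ha_val, ha_val, hmin1, hmin2, hins, Finset.sum_insert hnot]
    ring
  have hatop : ∀ j, a j ≤ a ℓ := by
    intro j
    rcases le_total j ℓ with h | h
    · exact hamono h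
    · have : a j = a ℓ := by
        rw [ha_val, ha_val, min_eq_right h, min_self]
      exact this.le
  have hsZR : ((sZ : ℤ) : ℝ) = s := by
    rw [hsZ_def, hs_def]; push_cast; ring
  have haℓ : a ℓ = B * ((ℓ:ℝ) + s + 1) - (ℓ:ℝ) * ((ℓ:ℝ) + 1) / 2 := by
    rw [ha_val, min_self]
    rw [Finset.sum_sub_distrib]
    have hcard : ((Finset.Icc (-sZ) ℓ).card : ℝ) = (ℓ:ℝ) + s + 1 := by
      rw [Int.card_Icc]
      have h1 : (ℓ + 1 - -sZ).toNat = ℓ + 1 + sZ := by omega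
      have h2 : ((ℓ + 1 - -sZ).toNat : ℤ) = ℓ + 1 + sZ := by
        rw [Int.toNat_of_nonneg (by omega)]; ring
      have h3 : (((ℓ + 1 - -sZ).toNat : ℕ) : ℝ) = ((ℓ:ℝ) + 1 + (sZ:ℝ)) := by
        exact_mod_cast h2
      rw [h3, hsZR]; ring
    have hgauss : ∑ i ∈ Finset.Icc (-sZ) ℓ, ((max i 0 : ℤ) : ℝ) = (ℓ:ℝ) * ((ℓ:ℝ) + 1) / 2 := by
      obtain ⟨n, hn⟩ : ∃ n : ℕ, ℓ = (n : ℤ) := ⟨ℓ.toNat, (Int.toNat_of_nonneg hl0).symm⟩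
      rw [hn, sum_max_Icc (-sZ) (by omega) n]
      have : ((n:ℤ):ℝ) = (n:ℝ) := by push_cast; ring
      rw [hn] at *
      push_cast
      ring
    rw [Finset.sum_const, nsmul_eq_mul, hcard, hgauss]
    ring
  -- apply the master counting lemma
  have hmaster := master_count G X K a hXK hup ha0 hamono
  set T : Finset V := Finset.univ.filter (fun v => X v < K) with hT_def
  set Tc : Finset V := Finset.univ.filter (fun v => ¬ X v < K) with hTc_def
  -- bound the sum over T
  have hΔ0 : ∀ v, 0 ≤ a (X v) - a (X v - 1) := fun v => by
    have := hamono (by omega : X v - 1 ≤ X v); linarith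
  have hS1 : (dmin : ℝ) * ∑ v ∈ T, (a (X v) - a (X v - 1))
      ≤ ∑ v ∈ T, (deg G v : ℝ) * (a (X v) - a (X v - 1)) := by
    rw [Finset.mul_sum]
    refine Finset.sum_le_sum fun v _ => ?_
    exact mul_le_mul_of_nonneg_right (by exact_mod_cast hdeg_ge v) (hΔ0 v)
  have hS2 : ∑ u ∈ Tc, (deg G u : ℝ) ≤ (dmax : ℝ) * (Tc.card : ℝ) := by
    calc ∑ u ∈ Tc, (deg G u : ℝ) ≤ ∑ u ∈ Tc, (dmax : ℝ) :=
          Finset.sum_le_sum fun u _ => by exact_mod_cast hdeg_le u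
      _ = (dmax : ℝ) * (Tc.card : ℝ) := by rw [Finset.sum_const, nsmul_eq_mul]; ring
  have haK1 : 0 ≤ a (K - 1) := ha0 _
  have hTsum : ∑ v ∈ T, (a (X v) - a (X v - 1)) ≤ 2 * ρ * a (K - 1) * (Tc.card : ℝ) := by
    have h1 : (dmin : ℝ) * ∑ v ∈ T, (a (X v) - a (X v - 1))
        ≤ 2 * a (K - 1) * ((dmax : ℝ) * (Tc.card : ℝ)) := by
      calc (dmin : ℝ) * ∑ v ∈ T, (a (X v) - a (X v - 1))
          ≤ ∑ v ∈ T, (deg G v : ℝ) * (a (X v) - a (X v - 1)) := hS1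
        _ ≤ 2 * a (K - 1) * ∑ u ∈ Tc, (deg G u : ℝ) := hmaster
        _ ≤ 2 * a (K - 1) * ((dmax : ℝ) * (Tc.card : ℝ)) := by
            refine mul_le_mul_of_nonneg_left hS2 (by linarith)
    have h2 : 2 * ρ * a (K - 1) * (Tc.card : ℝ)
        = (2 * a (K - 1) * ((dmax : ℝ) * (Tc.card : ℝ))) / (dmin : ℝ) := by
      rw [hρ_def]; field_simp
    rw [h2, le_div_iff₀ hdminR]
    calc (∑ v ∈ T, (a (X v) - a (X v - 1))) * (dmin : ℝ)
        = (dmin : ℝ) * ∑ v ∈ T, (a (X v) - a (X v - 1)) := by ring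
      _ ≤ _ := h1
  -- per-vertex lower bounds
  have hC : ∀ v ∈ T, B - ((max (X v) 0 : ℤ) : ℝ) ≤ a (X v) - a (X v - 1) := by
    intro v _
    rcases le_or_gt (X v) ℓ with h | h
    · rw [hastep (X v) (hXlow v) h]
    · have h1 := hΔ0 v
      have h2 : ((ℓ:ℤ) + 1 : ℤ) ≤ max (X v) 0 := by omega
      have h3 : ((ℓ:ℝ) + 1) ≤ ((max (X v) 0 : ℤ) : ℝ) := by exact_mod_cast h2
      linarith
  have hTc_val : ∀ v ∈ Tc, ((max (X v) 0 : ℤ) : ℝ) = (k:ℝ) - 1 := by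
    intro v hv
    have hvK : X v = K := by
      simp only [hTc_def, Finset.mem_filter] at hv
      exact le_antisymm (hXK v) (not_lt.1 hv.2)
    have : max (X v) 0 = K := by rw [hvK]; simp only [hK_def]; omega
    rw [this]
    simp only [hK_def]
    push_cast
    ring
  -- the grand total
  have htotal : ∑ v, (B - ((max (X v) 0 : ℤ) : ℝ)) ≤ 0 := by
    rw [← Finset.sum_filter_add_sum_filter_not Finset.univ (fun v => X v < K)]
    have p1 : ∑ v ∈ T, (B - ((max (X v) 0 : ℤ) : ℝ)) ≤ 2 * ρ * a (K - 1) * (Tc.card : ℝ) :=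
      le_trans (Finset.sum_le_sum hC) hTsum
    have p2 : ∑ v ∈ Tc, (B - ((max (X v) 0 : ℤ) : ℝ)) = (Tc.card : ℝ) * (B - ((k:ℝ) - 1)) := by
      rw [Finset.sum_congr rfl (fun v hv => by rw [hTc_val v hv])]
      rw [Finset.sum_const, nsmul_eq_mul]
    have p3 : 2 * ρ * a (K - 1) * (Tc.card : ℝ) ≤ 2 * ρ * a ℓ * (Tc.card : ℝ) := by
      have h4 : (0:ℝ) ≤ (Tc.card : ℝ) := Nat.cast_nonneg _
      have h5 := mul_le_mul_of_nonneg_right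
        (mul_le_mul_of_nonneg_left (hatop (K - 1)) (by positivity : (0:ℝ) ≤ 2 * ρ)) h4
      calc 2 * ρ * a (K - 1) * (Tc.card : ℝ) = 2 * ρ * (a (K - 1)) * (Tc.card : ℝ) := by ring
        _ ≤ 2 * ρ * (a ℓ) * (Tc.card : ℝ) := h5
        _ = 2 * ρ * a ℓ * (Tc.card : ℝ) := by ring
    have p4 : 2 * ρ * a ℓ + (B - ((k:ℝ) - 1)) = 0 := by
      rw [haℓ]
      linear_combination hBeq
    have p5 : 2 * ρ * a ℓ * (Tc.card : ℝ) + (Tc.card : ℝ) * (B - ((k:ℝ) - 1)) = 0 := by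
      linear_combination (Tc.card : ℝ) * p4
    calc ∑ v ∈ T, (B - ((max (X v) 0 : ℤ) : ℝ)) + ∑ v ∈ Tc, (B - ((max (X v) 0 : ℤ) : ℝ))
        ≤ 2 * ρ * a (K - 1) * (Tc.card : ℝ) + (Tc.card : ℝ) * (B - ((k:ℝ) - 1)) := by
          rw [p2]; linarith
      _ ≤ 2 * ρ * a ℓ * (Tc.card : ℝ) + (Tc.card : ℝ) * (B - ((k:ℝ) - 1)) := by linarith
      _ = 0 := p5
  -- conclude
  have hfinal : (Fintype.card V : ℝ) * B ≤ ∑ v, (c v : ℝ) := by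
    have h1 : ∑ v, (B - ((max (X v) 0 : ℤ) : ℝ))
        = (Fintype.card V : ℝ) * B - ∑ v, ((max (X v) 0 : ℤ) : ℝ) := by
      rw [Finset.sum_sub_distrib, Finset.sum_const, Finset.card_univ, nsmul_eq_mul]
    have h2 : ∑ v, ((max (X v) 0 : ℤ) : ℝ) ≤ ∑ v, (c v : ℝ) := by
      refine Finset.sum_le_sum fun v _ => ?_
      have h3 : max (X v) 0 ≤ (c v : ℤ) := by
        have := hcX v
        omega
      have h4 : ((max (X v) 0 : ℤ) : ℝ) ≤ ((c v : ℤ) : ℝ) := Int.cast_le.mpr h3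
      have h5 : ((c v : ℤ) : ℝ) = ((c v : ℕ) : ℝ) := Int.cast_natCast (c v)
      exact h5 ▸ h4
    linarith [htotal, h1, h2]
  have hgoal : (Fintype.card V : ℝ) * (((k : ℝ) - 1) + ρ * (ℓ : ℝ) * ((ℓ : ℝ) + 1)) /
      (2 * ρ * ((ℓ : ℝ) + s + 1) + 1) = (Fintype.card V : ℝ) * B := by
    rw [hB_def, mul_div_assoc]
  rw [hgoal]
  exact hfinal
end

section
/- In the n-node ring R_n with the irreversible majority rule with threshold λ ≤ 1/2 and weight set {0,…,k−1}: a configuration is a k-dynamo if and only if at least one node has initial weight k−1. Moreover, an optimal k-dynamo has total weight exactly k−1 and reaches the all-(k−1) configuration within t = k−2+⌈(n−1)/2⌉ rounds. -/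
variable {V : Type*} [Fintype V]

set_option linter.unusedSectionVars false

section Aux

variable {n : ℕ} [NeZero n]

lemma natCast_ne_zero_zmod {a : ℕ} (h0 : 0 < a) (h : a < n) : ((a : ZMod n)) ≠ 0 := by
  rw [Ne, ZMod.natCast_eq_zero_iff]
  intro hd; exact absurd (Nat.le_of_dvd h0 hd) (by omega)

lemma one_ne_zero_zmod (hn : 3 ≤ n) : (1 : ZMod n) ≠ 0 := by
  have := natCast_ne_zero_zmod (n := n) (a := 1) (by norm_num) (by omega)
  simpa using this

lemma two_ne_zero_zmod (hn : 3 ≤ n) : (2 : ZMod n) ≠ 0 := by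
  have := natCast_ne_zero_zmod (n := n) (a := 2) (by norm_num) (by omega)
  simpa using this

lemma ring_adj (hn : 3 ≤ n) (v u : ZMod n) :
    (ringGraph n).Adj v u ↔ u = v + 1 ∨ u = v - 1 := by
  rw [ringGraph, SimpleGraph.fromRel_adj]
  constructor
  · rintro ⟨-, h | h⟩
    · exact Or.inl h
    · exact Or.inr (by rw [h]; ring)
  · rintro (h | h)
    · exact ⟨by rw [h]; intro hh; exact one_ne_zero_zmod hn (by linear_combination -hh), Or.inl h⟩
    · refine ⟨?_, Or.inr (by rw [h]; ring)⟩
      rw [h]; intro hh; exact one_ne_zero_zmod hn (by linear_combination hh)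

lemma ring_nbhd (hn : 3 ≤ n) (v : ZMod n) :
    {u | (ringGraph n).Adj v u} = {v + 1, v - 1} := by
  ext u; simp [ring_adj hn]

lemma ring_deg (hn : 3 ≤ n) (v : ZMod n) : deg (ringGraph n) v = 2 := by
  rw [deg, ring_nbhd hn, Nat.card_coe_set_eq]
  apply Set.ncard_pair
  intro h
  exact two_ne_zero_zmod hn (by linear_combination h)

lemma thresh_eq_one {lam : ℝ} (hl0 : 0 < lam) (hl1 : lam ≤ 1 / 2) :
    ⌈lam * (2 : ℝ)⌉₊ = 1 := by
  rw [Nat.ceil_eq_iff one_ne_zero]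
  constructor
  · simpa using by positivity
  · push_cast; linarith

lemma ring_step (hn : 3 ≤ n) {lam : ℝ} (hl0 : 0 < lam) (hl1 : lam ≤ 1 / 2)
    (c : ZMod n → ℕ) (v : ZMod n) :
    step (ringGraph n) lam c v =
      if c v < c (v + 1) ∨ c v < c (v - 1) then c v + 1 else c v := by
  rw [step, ring_deg hn, show ((2:ℕ):ℝ) = 2 by norm_num, thresh_eq_one hl0 hl1]
  congr 1
  rw [eq_iff_iff]
  rw [show (1 ≤ Nat.card {u | (ringGraph n).Adj v u ∧ c v < c u}) ↔
      (0 < Nat.card {u | (ringGraph n).Adj v u ∧ c v < c u}) from Iff.rfl,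
    Nat.card_pos_iff]
  constructor
  · rintro ⟨⟨u, hu, hcu⟩, -⟩
    rcases (ring_adj hn v u).mp hu with h | h <;> subst h
    · exact Or.inl hcu
    · exact Or.inr hcu
  · intro h
    refine ⟨?_, Set.toFinite _⟩
    rw [Set.nonempty_coe_sort]
    rcases h with h | h
    · exact ⟨v + 1, (ring_adj hn v _).mpr (Or.inl rfl), h⟩
    · exact ⟨v - 1, (ring_adj hn v _).mpr (Or.inr rfl), h⟩

variable (hn : 3 ≤ n) {lam : ℝ} (hl0 : 0 < lam) (hl1 : lam ≤ 1 / 2)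

include hn hl0 hl1

lemma step_ge_s11 (c : ZMod n → ℕ) (v : ZMod n) : c v ≤ step (ringGraph n) lam c v := by
  rw [ring_step hn hl0 hl1]; split <;> omega

lemma step_bound_s11 {m : ℕ} (c : ZMod n → ℕ) (hc : ∀ u, c u ≤ m) (v : ZMod n) :
    step (ringGraph n) lam c v ≤ m := by
  rw [ring_step hn hl0 hl1]
  split
  · rename_i h
    rcases h with h | h
    · exact le_trans h (hc _)
    · exact le_trans h (hc _)
  · exact hc v

lemma iter_bound {m : ℕ} (c : ZMod n → ℕ) (hc : ∀ u, c u ≤ m) (t : ℕ) (v : ZMod n) :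
    (step (ringGraph n) lam)^[t] c v ≤ m := by
  induction t generalizing c with
  | zero => exact hc v
  | succ t ih =>
    rw [Function.iterate_succ_apply]
    exact ih _ (step_bound_s11 hn hl0 hl1 c hc)

lemma iter_ge (c : ZMod n → ℕ) (t : ℕ) (v : ZMod n) :
    c v ≤ (step (ringGraph n) lam)^[t] c v := by
  induction t with
  | zero => exact le_rfl
  | succ t ih =>
    rw [Function.iterate_succ_apply']
    exact le_trans ih (step_ge_s11 hn hl0 hl1 _ v)

lemma iter_top {m : ℕ} (c : ZMod n → ℕ) (hc : ∀ u, c u ≤ m) {v : ZMod n} (hv : c v = m)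
    (t : ℕ) : (step (ringGraph n) lam)^[t] c v = m :=
  le_antisymm (iter_bound hn hl0 hl1 c hc t v) (hv ▸ iter_ge hn hl0 hl1 c t v)

lemma step_mono {c c' : ZMod n → ℕ} (h : ∀ u, c u ≤ c' u) (v : ZMod n) :
    step (ringGraph n) lam c v ≤ step (ringGraph n) lam c' v := by
  rw [ring_step hn hl0 hl1, ring_step hn hl0 hl1]
  by_cases hc : c v < c (v + 1) ∨ c v < c (v - 1)
  · rw [if_pos hc]
    rcases lt_or_eq_of_le (h v) with hv | hv
    · split <;> omega
    · have hc' : c' v < c' (v + 1) ∨ c' v < c' (v - 1) := by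
        rcases hc with h1 | h1
        · exact Or.inl (by have := h (v + 1); omega)
        · exact Or.inr (by have := h (v - 1); omega)
      rw [if_pos hc']; omega
  · rw [if_neg hc]; have := h v; split <;> omega

lemma iter_mono {c c' : ZMod n → ℕ} (h : ∀ u, c u ≤ c' u) (t : ℕ) (v : ZMod n) :
    (step (ringGraph n) lam)^[t] c v ≤ (step (ringGraph n) lam)^[t] c' v := by
  induction t generalizing c c' with
  | zero => exact h v
  | succ t ih =>
    rw [Function.iterate_succ_apply, Function.iterate_succ_apply]
    exact ih fun u => step_mono hn hl0 hl1 h u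

omit hl0 hl1

lemma e_le_half (w : ZMod n) : min w.val (n - w.val) ≤ n / 2 := by
  have := ZMod.val_lt w; omega

omit hn in
lemma e_eq_zero {w : ZMod n} (h : min w.val (n - w.val) = 0) : w = 0 := by
  have hlt := ZMod.val_lt w
  have hv : w.val = 0 := by omega
  have hc := ZMod.natCast_zmod_val w
  rw [← hc, hv]; simp

lemma e_dec {w : ZMod n} (hw : w ≠ 0) :
    ∃ u : ZMod n, (u = w + 1 ∨ u = w - 1) ∧
      min u.val (n - u.val) + 1 ≤ min w.val (n - w.val) := by
  have hlt := ZMod.val_lt w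
  have hv0 : 0 < w.val := by
    rcases Nat.eq_zero_or_pos w.val with h0 | h0
    · exact absurd (e_eq_zero (by omega)) hw
    · exact h0
  have hcast := ZMod.natCast_zmod_val w
  by_cases hle : w.val ≤ n - w.val
  · refine ⟨w - 1, Or.inr rfl, ?_⟩
    have he : w - 1 = ((w.val - 1 : ℕ) : ZMod n) := by
      rw [Nat.cast_sub hv0, hcast, Nat.cast_one]
    rw [he, ZMod.val_cast_of_lt (by omega)]
    omega
  · refine ⟨w + 1, Or.inl rfl, ?_⟩
    by_cases he : w.val + 1 = n
    · have h0 : w + 1 = 0 := by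
        rw [← hcast, ← Nat.cast_one, ← Nat.cast_add, he]; simp
      rw [h0]
      simp only [ZMod.val_zero]
      omega
    · have h1 : w + 1 = ((w.val + 1 : ℕ) : ZMod n) := by
        rw [Nat.cast_add, Nat.cast_one, hcast]
      rw [h1, ZMod.val_cast_of_lt (by omega)]
      omega

include hl0 hl1

lemma main_lb {k : ℕ} (hk : 2 ≤ k) (v₀ : ZMod n) (t : ℕ) (v : ZMod n) :
    min (k - 1) (t + 1 - min (v - v₀).val (n - (v - v₀).val)) ≤
      (step (ringGraph n) lam)^[t] (fun u => if u = v₀ then k - 1 else 0) v := by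
  set c₀ : ZMod n → ℕ := fun u => if u = v₀ then k - 1 else 0 with hc₀
  have hbd : ∀ u, c₀ u ≤ k - 1 := by intro u; simp only [hc₀]; split <;> omega
  have htop : ∀ s, (step (ringGraph n) lam)^[s] c₀ v₀ = k - 1 := by
    intro s
    exact iter_top hn hl0 hl1 c₀ hbd (by simp [hc₀]) s
  induction t generalizing v with
  | zero =>
    by_cases hv : v = v₀
    · subst hv
      simp only [sub_self, ZMod.val_zero, Function.iterate_zero, id_eq]
      have h1 : c₀ v = k - 1 := by simp [hc₀]
      omega
    · have hne : (v - v₀) ≠ 0 := fun h => hv (by linear_combination h)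
      have h1 : 0 < min (v - v₀).val (n - (v - v₀).val) := by
        rcases Nat.eq_zero_or_pos (min (v - v₀).val (n - (v - v₀).val)) with h0 | h0
        · exact absurd (e_eq_zero h0) hne
        · exact h0
      simp only [Function.iterate_zero, id_eq]
      omega
  | succ t ih =>
    rw [Function.iterate_succ_apply']
    set g := (step (ringGraph n) lam)^[t] c₀ with hg
    set ev := min (v - v₀).val (n - (v - v₀).val) with hev
    by_cases hdone : min (k - 1) (t + 1 + 1 - ev) ≤ g v
    · exact le_trans hdone (step_ge_s11 hn hl0 hl1 g v)
    push_neg at hdone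
    have hgbd : g v < k - 1 := by
      have := iter_bound hn hl0 hl1 c₀ hbd t v
      omega
    have hvne : v ≠ v₀ := by
      intro h; subst h
      rw [hg, htop t] at hgbd; omega
    have hwne : (v - v₀) ≠ 0 := fun h => hvne (by linear_combination h)
    obtain ⟨w, hw, hew⟩ := e_dec hn hwne
    set u : ZMod n := v₀ + w with hu
    have huadj : u = v + 1 ∨ u = v - 1 := by
      rcases hw with h | h
      · exact Or.inl (by rw [hu, h]; ring)
      · exact Or.inr (by rw [hu, h]; ring)
    have hueq : u - v₀ = w := by rw [hu]; ring
    have ihu := ih u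
    rw [hueq] at ihu
    have ihv := ih v
    rw [← hev] at ihv
    have hgu : g v < g u := by omega
    have hstep : step (ringGraph n) lam g v = g v + 1 := by
      rw [ring_step hn hl0 hl1, if_pos]
      rcases huadj with h | h
      · exact Or.inl (h ▸ hgu)
      · exact Or.inr (h ▸ hgu)
    rw [hstep]
    omega

end Aux

section Aux2
variable {n : ℕ} [NeZero n]

lemma ceil_half {m : ℕ} (h : 2 ≤ m) : ⌈((m:ℝ))/2⌉₊ = (m+1)/2 := by
  rw [Nat.ceil_eq_iff (by omega)]
  constructor
  · rw [lt_div_iff₀ (by norm_num)]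
    exact_mod_cast (by omega : ((m+1)/2 - 1) * 2 < m)
  · rw [div_le_iff₀ (by norm_num)]
    exact_mod_cast (by omega : m ≤ ((m+1)/2) * 2)

lemma ceil_half' {n : ℕ} (h : 3 ≤ n) : ⌈((n : ℝ) - 1) / 2⌉₊ = n / 2 := by
  have h1 : ((n : ℝ) - 1) = ((n - 1 : ℕ) : ℝ) := by
    rw [Nat.cast_sub (by omega), Nat.cast_one]
  rw [h1, ceil_half (by omega)]
  omega

end Aux2

/-- Theorem 3: on the n-node ring with threshold λ ≤ 1/2, a valid
configuration is a k-dynamo iff some node has initial weight k−1; an optimal k-dynamo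
has total weight exactly k−1 and converges within k−2+⌈(n−1)/2⌉ rounds. -/
theorem stmt11 (n k : ℕ) [NeZero n] (hn : 3 ≤ n) (hk : 2 ≤ k)
    (lam : ℝ) (hl0 : 0 < lam) (hl1 : lam ≤ 1 / 2) :
    (∀ c : ZMod n → ℕ, (∀ v, c v ≤ k - 1) →
      ((∃ T, ∀ v, (step (ringGraph n) lam)^[T] c v = k - 1) ↔ ∃ v, c v = k - 1)) ∧
    (∃ c : ZMod n → ℕ, (∀ v, c v ≤ k - 1) ∧ (∑ v, c v) = k - 1 ∧
      ∀ v, (step (ringGraph n) lam)^[k - 2 + ⌈((n : ℝ) - 1) / 2⌉₊] c v = k - 1) ∧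
    (∀ c : ZMod n → ℕ, (∀ v, c v ≤ k - 1) →
      (∃ T, ∀ v, (step (ringGraph n) lam)^[T] c v = k - 1) → k - 1 ≤ ∑ v, c v) := by
  have hceil : ⌈((n : ℝ) - 1) / 2⌉₊ = n / 2 := ceil_half' hn
  set T : ℕ := k - 2 + n / 2 with hT
  -- the forward direction (dynamo → exists node with weight k-1)
  have hex : ∀ c : ZMod n → ℕ, (∀ v, c v ≤ k - 1) →
      (∃ T', ∀ v, (step (ringGraph n) lam)^[T'] c v = k - 1) → ∃ v, c v = k - 1 := by
    intro c hc ⟨T', hT'⟩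
    by_contra hno
    push_neg at hno
    have hbd : ∀ v, c v ≤ k - 2 := by
      intro v; have := hc v; have := hno v; omega
    have h1 := iter_bound hn hl0 hl1 c hbd T' (0 : ZMod n)
    have h2 := hT' (0 : ZMod n)
    omega
  -- the indicator configuration converges in time T
  have hkey : ∀ v₀ v : ZMod n,
      (step (ringGraph n) lam)^[T] (fun u => if u = v₀ then k - 1 else 0) v = k - 1 := by
    intro v₀ v
    have hbd : ∀ u, (if u = v₀ then k - 1 else 0) ≤ k - 1 := by
      intro u; split <;> omega
    refine le_antisymm (iter_bound hn hl0 hl1 _ hbd T v) ?_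
    have hlb := main_lb hn hl0 hl1 hk v₀ T v
    have he := e_le_half hn (v - v₀)
    have : min (k - 1) (T + 1 - min (v - v₀).val (n - (v - v₀).val)) = k - 1 := by
      omega
    omega
  refine ⟨?_, ?_, ?_⟩
  · intro c hc
    constructor
    · exact hex c hc
    · rintro ⟨v₀, hv₀⟩
      refine ⟨T, fun v => ?_⟩
      refine le_antisymm (iter_bound hn hl0 hl1 c hc T v) ?_
      have hmono : ∀ u, (if u = v₀ then k - 1 else 0) ≤ c u := by
        intro u; split
        · rename_i h; subst h; omega
        · omega
      calc k - 1 = (step (ringGraph n) lam)^[T] (fun u => if u = v₀ then k - 1 else 0) v :=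
            (hkey v₀ v).symm
        _ ≤ (step (ringGraph n) lam)^[T] c v := iter_mono hn hl0 hl1 hmono T v
  · refine ⟨fun u => if u = (0 : ZMod n) then k - 1 else 0, fun v => by dsimp only; split <;> omega, ?_, ?_⟩
    · rw [Finset.sum_ite_eq' Finset.univ (0 : ZMod n) (fun _ => k - 1)]
      simp
    · intro v
      rw [hceil]
      exact hkey 0 v
  · intro c hc hdyn
    obtain ⟨v₀, hv₀⟩ := hex c hc hdyn
    calc k - 1 = c v₀ := hv₀.symm
      _ ≤ ∑ v, c v := Finset.single_le_sum (fun i _ => Nat.zero_le _) (Finset.mem_univ v₀)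
end
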